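/- arXiv:1707.08936 — 4 statements merged into one kernel-verified Lean document; each statement's English description precedes it below -/
import Mathlib

section
/- Let φ : ℝ × ℝ² → ℝ be C² on a neighborhood of (t₀, x₀) and assume ∇ₓφ(t₀, x₀) ≠ 0. Define, for t near t₀, the unit normal ν(t) = ∇ₓφ(t, x₀)/‖∇ₓφ(t, x₀)‖ ∈ ℝ². Then the derivative ν′(t₀) is nonzero if and only if h(t₀, x₀) ≠ 0. (Equivalence of the local diffeomorphism property of the normal map with the local Bolker condition; Proposition 2.1.) -/
/-!
Write `∇ₓφ(t, x₀) = (a(t), b(t))` and `r = √(a² + b²)`. Differentiating `ν = r⁻¹ • (a, b)` gives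
`ν' = (a b' - b a') / r³ • (-b, a)`: the component of `(a', b')` along `(a, b)` cancels and only the
rotated direction survives, with coefficient the Bolker determinant divided by `r³`. Since
`(-b, a) ≠ 0`, `ν'(t₀)` vanishes exactly when `h(t₀, x₀)` does.
-/

open Filter Topology

/-- Spatial partial derivative ∂φ/∂x¹. -/
noncomputable def dx1 (φ : ℝ → ℝ → ℝ → ℝ) (t x₁ x₂ : ℝ) : ℝ :=
  deriv (fun y => φ t y x₂) x₁

/-- Spatial partial derivative ∂φ/∂x². -/
noncomputable def dx2 (φ : ℝ → ℝ → ℝ → ℝ) (t x₁ x₂ : ℝ) : ℝ :=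
  deriv (fun y => φ t x₁ y) x₂

/-- The Bolker determinant
h(t,x) = ∂φ/∂x¹ · ∂²φ/∂t∂x² − ∂φ/∂x² · ∂²φ/∂t∂x¹. -/
noncomputable def bolker (φ : ℝ → ℝ → ℝ → ℝ) (t x₁ x₂ : ℝ) : ℝ :=
  dx1 φ t x₁ x₂ * deriv (fun s => dx2 φ s x₁ x₂) t -
    dx2 φ t x₁ x₂ * deriv (fun s => dx1 φ s x₁ x₂) t

theorem sq_add_sq_pos_of_prod_ne_zero {a b : ℝ} (h : ((a, b) : ℝ × ℝ) ≠ 0) :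
    0 < a ^ 2 + b ^ 2 := by
  obtain h | h : a ≠ 0 ∨ b ≠ 0 := by
    contrapose! h
    simp [h.1, h.2]
  all_goals positivity

theorem hasDerivAt_normalize_prod {u w : ℝ → ℝ} {u' w' t : ℝ} (hu : HasDerivAt u u' t)
    (hw : HasDerivAt w w' t) (hne : (u t, w t) ≠ 0) :
    HasDerivAt (fun s => (√(u s ^ 2 + w s ^ 2))⁻¹ • ((u s, w s) : ℝ × ℝ))
      (((u t * w' - w t * u') / √(u t ^ 2 + w t ^ 2) ^ 3) • ((-w t, u t) : ℝ × ℝ)) t := by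
  have hq := sq_add_sq_pos_of_prod_ne_zero hne
  have hr : 0 < √(u t ^ 2 + w t ^ 2) := Real.sqrt_pos.2 hq
  have hr2 : √(u t ^ 2 + w t ^ 2) ^ 2 = u t ^ 2 + w t ^ 2 := Real.sq_sqrt hq.le
  have hinv := (((hu.pow 2).add (hw.pow 2)).sqrt hq.ne').inv hr.ne'
  refine (hinv.smul (hu.prodMk hw)).congr_deriv ?_
  ext <;>
    simp only [Pi.add_apply, Pi.pow_apply, Pi.inv_apply, Prod.smul_mk, smul_eq_mul, Nat.cast_ofNat,
      Nat.add_one_sub_one, pow_one, Prod.mk_add_mk, mul_neg] <;>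
    field_simp <;> rw [hr2] <;> ring

section Slices

variable {φ : ℝ → ℝ → ℝ → ℝ} {t₀ x₁ x₂ : ℝ}

theorem eventually_differentiableAt_slice
    (hφ : ContDiffAt ℝ 2 (fun p : ℝ × ℝ × ℝ => φ p.1 p.2.1 p.2.2) (t₀, x₁, x₂)) :
    ∀ᶠ t in 𝓝 t₀,
      DifferentiableAt ℝ (fun p : ℝ × ℝ × ℝ => φ p.1 p.2.1 p.2.2) (t, x₁, x₂) := by
  have hslice : Continuous fun t : ℝ => ((t, x₁, x₂) : ℝ × ℝ × ℝ) := by fun_prop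
  filter_upwards [hslice.continuousAt.eventually (hφ.eventually (by simp))] with t ht
  exact ht.differentiableAt (by norm_num)

theorem differentiableAt_fderiv_slice_apply
    (hφ : ContDiffAt ℝ 2 (fun p : ℝ × ℝ × ℝ => φ p.1 p.2.1 p.2.2) (t₀, x₁, x₂))
    (v : ℝ × ℝ × ℝ) :
    DifferentiableAt ℝ
      (fun t => fderiv ℝ (fun p : ℝ × ℝ × ℝ => φ p.1 p.2.1 p.2.2) (t, x₁, x₂) v) t₀ := by
  have hslice : ContDiffAt ℝ 1 (fun t : ℝ => ((t, x₁, x₂) : ℝ × ℝ × ℝ)) t₀ := by fun_prop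
  exact (((hφ.fderiv_right (by norm_num)).comp t₀ hslice).clm_apply
    contDiffAt_const).differentiableAt one_ne_zero

theorem dx1_eventuallyEq_fderiv
    (hφ : ContDiffAt ℝ 2 (fun p : ℝ × ℝ × ℝ => φ p.1 p.2.1 p.2.2) (t₀, x₁, x₂)) :
    (fun t => dx1 φ t x₁ x₂) =ᶠ[𝓝 t₀]
      fun t => fderiv ℝ (fun p : ℝ × ℝ × ℝ => φ p.1 p.2.1 p.2.2) (t, x₁, x₂) (0, 1, 0) := by
  filter_upwards [eventually_differentiableAt_slice hφ] with t ht
  have hline : HasDerivAt (fun y : ℝ => ((t, y, x₂) : ℝ × ℝ × ℝ)) (0, 1, 0) x₁ :=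
    (hasDerivAt_const _ _).prodMk ((hasDerivAt_id _).prodMk (hasDerivAt_const _ _))
  exact (ht.hasFDerivAt.comp_hasDerivAt x₁ hline).deriv

theorem dx2_eventuallyEq_fderiv
    (hφ : ContDiffAt ℝ 2 (fun p : ℝ × ℝ × ℝ => φ p.1 p.2.1 p.2.2) (t₀, x₁, x₂)) :
    (fun t => dx2 φ t x₁ x₂) =ᶠ[𝓝 t₀]
      fun t => fderiv ℝ (fun p : ℝ × ℝ × ℝ => φ p.1 p.2.1 p.2.2) (t, x₁, x₂) (0, 0, 1) := by
  filter_upwards [eventually_differentiableAt_slice hφ] with t ht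
  have hline : HasDerivAt (fun y : ℝ => ((t, x₁, y) : ℝ × ℝ × ℝ)) (0, 0, 1) x₂ :=
    (hasDerivAt_const _ _).prodMk ((hasDerivAt_const _ _).prodMk (hasDerivAt_id _))
  exact (ht.hasFDerivAt.comp_hasDerivAt x₂ hline).deriv

theorem differentiableAt_dx1
    (hφ : ContDiffAt ℝ 2 (fun p : ℝ × ℝ × ℝ => φ p.1 p.2.1 p.2.2) (t₀, x₁, x₂)) :
    DifferentiableAt ℝ (fun t => dx1 φ t x₁ x₂) t₀ :=
  (differentiableAt_fderiv_slice_apply hφ _).congr_of_eventuallyEq (dx1_eventuallyEq_fderiv hφ)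

theorem differentiableAt_dx2
    (hφ : ContDiffAt ℝ 2 (fun p : ℝ × ℝ × ℝ => φ p.1 p.2.1 p.2.2) (t₀, x₁, x₂)) :
    DifferentiableAt ℝ (fun t => dx2 φ t x₁ x₂) t₀ :=
  (differentiableAt_fderiv_slice_apply hφ _).congr_of_eventuallyEq (dx2_eventuallyEq_fderiv hφ)

end Slices

/-- Proposition 2.1: the derivative of the unit normal
ν(t) = ∇ₓφ(t,x₀)/‖∇ₓφ(t,x₀)‖ at t₀ is nonzero iff the local Bolker
condition h(t₀,x₀) ≠ 0 holds. -/
theorem stmt0 (φ : ℝ → ℝ → ℝ → ℝ) (t₀ x₁ x₂ : ℝ)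
    (hφ : ContDiffAt ℝ 2 (fun p : ℝ × ℝ × ℝ => φ p.1 p.2.1 p.2.2) (t₀, x₁, x₂))
    (hgrad : ((dx1 φ t₀ x₁ x₂, dx2 φ t₀ x₁ x₂) : ℝ × ℝ) ≠ 0) :
    deriv (fun t =>
        (Real.sqrt ((dx1 φ t x₁ x₂) ^ 2 + (dx2 φ t x₁ x₂) ^ 2))⁻¹ •
          ((dx1 φ t x₁ x₂, dx2 φ t x₁ x₂) : ℝ × ℝ)) t₀ ≠ 0 ↔
      bolker φ t₀ x₁ x₂ ≠ 0 := by
  have hν := hasDerivAt_normalize_prod (differentiableAt_dx1 hφ).hasDerivAt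
    (differentiableAt_dx2 hφ).hasDerivAt hgrad
  have hrot : ((-dx2 φ t₀ x₁ x₂, dx1 φ t₀ x₁ x₂) : ℝ × ℝ) ≠ 0 := by
    contrapose! hgrad
    simp_all [Prod.ext_iff]
  have hr : Real.sqrt ((dx1 φ t₀ x₁ x₂) ^ 2 + (dx2 φ t₀ x₁ x₂) ^ 2) ^ 3 ≠ 0 :=
    pow_ne_zero 3 (Real.sqrt_pos.2 (sq_add_sq_pos_of_prod_ne_zero hgrad)).ne'
  rw [hν.deriv, Ne, smul_eq_zero, div_eq_zero_iff]
  simp [bolker, hrot, hr]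
end

section
/- Let φ : ℝ × ℝ² → ℝ be C² on a neighborhood of (t₀, x₀), let σ₀ ≠ 0, and assume h(t₀, x₀) ≠ 0. Define Π_Y : ℝ × ℝ² × ℝ → ℝ⁴ by Π_Y(t, x, σ) = (φ(t,x), t, σ, −σ·∂ₜφ(t,x)). Then Π_Y is a local diffeomorphism at p = (t₀, x₀, σ₀): there exist open sets U ∋ p and V ∋ Π_Y(p) such that Π_Y maps U bijectively onto V and the inverse map V → U is continuously differentiable. (Part of Lemma 4.3: the measurement-side projection of the canonical relation is a local diffeomorphism.) -/
open Topology
open scoped ContDiff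

/-!
The second and third components of `Π_Y` are `t` and `σ`, so its differential at
`p = (t₀, x₀, σ₀)` is invertible iff the `2 × 2` system in `dx` with rows `∇ₓφ` and `-σ₀ ∇ₓ∂ₜφ`
is. Its determinant is `-σ₀ (∂₁φ ∂₂∂ₜφ - ∂₂φ ∂₁∂ₜφ)`, and since `φ` is `C²` the mixed partials
commute, so this is `-σ₀ h(t₀, x₀) ≠ 0`. As `∂ₜφ` is `C¹` near `(t₀, x₀)`, `Π_Y` is `C¹` near `p`
and the inverse function theorem applies.
-/

/-- Time partial derivative ∂ₜφ. -/
noncomputable def dt (φ : ℝ → ℝ → ℝ → ℝ) (t x₁ x₂ : ℝ) : ℝ :=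
  deriv (fun s => φ s x₁ x₂) t

/-- The measurement-side projection Π_Y(t, x, σ) = (φ(t,x), t, σ, −σ·∂ₜφ(t,x)),
with (t, x¹, x², σ) ∈ ℝ × ℝ² × ℝ ≅ ℝ⁴. -/
noncomputable def PiY (φ : ℝ → ℝ → ℝ → ℝ) (p : ℝ × ℝ × ℝ × ℝ) : ℝ × ℝ × ℝ × ℝ :=
  (φ p.1 p.2.1 p.2.2.1, p.1, p.2.2.2, -p.2.2.2 * dt φ p.1 p.2.1 p.2.2.1)

def uncurry3 {α β γ δ : Type*} (f : α → β → γ → δ) (p : α × β × γ) : δ :=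
  f p.1 p.2.1 p.2.2

section Partials

variable {φ : ℝ → ℝ → ℝ → ℝ} {q : ℝ × ℝ × ℝ}

theorem uncurry3_dt_eq_fderiv (h : DifferentiableAt ℝ (uncurry3 φ) q) :
    uncurry3 (dt φ) q = fderiv ℝ (uncurry3 φ) q (1, 0, 0) := by
  have hline : HasDerivAt (fun s : ℝ => (s, q.2.1, q.2.2)) ((1 : ℝ), (0 : ℝ), (0 : ℝ)) q.1 :=
    (hasDerivAt_id _).prodMk ((hasDerivAt_const _ _).prodMk (hasDerivAt_const _ _))
  exact (h.hasFDerivAt.comp_hasDerivAt q.1 hline).deriv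

theorem uncurry3_dx1_eq_fderiv (h : DifferentiableAt ℝ (uncurry3 φ) q) :
    uncurry3 (dx1 φ) q = fderiv ℝ (uncurry3 φ) q (0, 1, 0) := by
  have hline : HasDerivAt (fun y : ℝ => (q.1, y, q.2.2)) ((0 : ℝ), (1 : ℝ), (0 : ℝ)) q.2.1 :=
    (hasDerivAt_const _ _).prodMk ((hasDerivAt_id _).prodMk (hasDerivAt_const _ _))
  exact (h.hasFDerivAt.comp_hasDerivAt q.2.1 hline).deriv

theorem uncurry3_dx2_eq_fderiv (h : DifferentiableAt ℝ (uncurry3 φ) q) :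
    uncurry3 (dx2 φ) q = fderiv ℝ (uncurry3 φ) q (0, 0, 1) := by
  have hline : HasDerivAt (fun y : ℝ => (q.1, q.2.1, y)) ((0 : ℝ), (0 : ℝ), (1 : ℝ)) q.2.2 :=
    (hasDerivAt_const _ _).prodMk ((hasDerivAt_const _ _).prodMk (hasDerivAt_id _))
  exact (h.hasFDerivAt.comp_hasDerivAt q.2.2 hline).deriv

end Partials

section SecondDerivative

variable {𝕜 : Type*} [NontriviallyNormedField 𝕜] {E F : Type*} [NormedAddCommGroup E]
  [NormedSpace 𝕜 E] [NormedAddCommGroup F] [NormedSpace 𝕜 F] {Φ D : E → F} {x v : E}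

theorem ContDiffAt.eventually_differentiableAt {n : WithTop ℕ∞} (hΦ : ContDiffAt 𝕜 n Φ x)
    (hn : n ≠ 0) (hn' : n ≠ ∞) : ∀ᶠ y in 𝓝 x, DifferentiableAt 𝕜 Φ y :=
  (hΦ.eventually hn').mono fun _ hy => hy.differentiableAt hn

theorem ContDiffAt.eventuallyEq_fderiv_apply (hΦ : ContDiffAt 𝕜 2 Φ x)
    (hD : ∀ y, DifferentiableAt 𝕜 Φ y → D y = fderiv 𝕜 Φ y v) :
    D =ᶠ[𝓝 x] fun y => fderiv 𝕜 Φ y v :=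
  (hΦ.eventually_differentiableAt two_ne_zero (by simp)).mono hD

theorem ContDiffAt.contDiffAt_of_eq_fderiv_apply (hΦ : ContDiffAt 𝕜 2 Φ x)
    (hD : ∀ y, DifferentiableAt 𝕜 Φ y → D y = fderiv 𝕜 Φ y v) : ContDiffAt 𝕜 1 D x :=
  ((hΦ.fderiv_right le_rfl).clm_apply contDiffAt_const).congr_of_eventuallyEq
    (hΦ.eventuallyEq_fderiv_apply hD)

theorem ContDiffAt.hasFDerivAt_of_eq_fderiv_apply (hΦ : ContDiffAt 𝕜 2 Φ x)
    (hD : ∀ y, DifferentiableAt 𝕜 Φ y → D y = fderiv 𝕜 Φ y v) :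
    HasFDerivAt D ((fderiv 𝕜 (fderiv 𝕜 Φ) x).flip v) x := by
  have hΦ' := ((hΦ.fderiv_right le_rfl).differentiableAt one_ne_zero).hasFDerivAt
  simpa using (hΦ'.clm_apply (hasFDerivAt_const v x)).congr_of_eventuallyEq
    (hΦ.eventuallyEq_fderiv_apply hD)

end SecondDerivative

section Bolker

variable {φ : ℝ → ℝ → ℝ → ℝ} {t x₁ x₂ : ℝ}

theorem deriv_time_eq_fderiv_fderiv (hφ : ContDiffAt ℝ 2 (uncurry3 φ) (t, x₁, x₂))
    {D : ℝ → ℝ → ℝ → ℝ} {v : ℝ × ℝ × ℝ}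
    (hD : ∀ q, DifferentiableAt ℝ (uncurry3 φ) q → uncurry3 D q = fderiv ℝ (uncurry3 φ) q v) :
    deriv (fun s => D s x₁ x₂) t = fderiv ℝ (fderiv ℝ (uncurry3 φ)) (t, x₁, x₂) v (1, 0, 0) := by
  have hD' := hφ.hasFDerivAt_of_eq_fderiv_apply hD
  calc deriv (fun s => D s x₁ x₂) t = uncurry3 (dt D) (t, x₁, x₂) := rfl
    _ = fderiv ℝ (uncurry3 D) (t, x₁, x₂) (1, 0, 0) :=
        uncurry3_dt_eq_fderiv hD'.differentiableAt
    _ = fderiv ℝ (fderiv ℝ (uncurry3 φ)) (t, x₁, x₂) (1, 0, 0) v := by rw [hD'.fderiv]; rfl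
    _ = _ := hφ.isSymmSndFDerivAt (by simp) _ _

theorem bolker_eq_fderiv (hφ : ContDiffAt ℝ 2 (uncurry3 φ) (t, x₁, x₂)) :
    bolker φ t x₁ x₂ =
      fderiv ℝ (uncurry3 φ) (t, x₁, x₂) (0, 1, 0) *
          fderiv ℝ (fderiv ℝ (uncurry3 φ)) (t, x₁, x₂) (0, 0, 1) (1, 0, 0) -
        fderiv ℝ (uncurry3 φ) (t, x₁, x₂) (0, 0, 1) *
          fderiv ℝ (fderiv ℝ (uncurry3 φ)) (t, x₁, x₂) (0, 1, 0) (1, 0, 0) := by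
  have hdiff := hφ.differentiableAt two_ne_zero
  rw [bolker, deriv_time_eq_fderiv_fderiv hφ fun _ => uncurry3_dx1_eq_fderiv,
    deriv_time_eq_fderiv_fderiv hφ fun _ => uncurry3_dx2_eq_fderiv]
  change uncurry3 (dx1 φ) (t, x₁, x₂) * _ - uncurry3 (dx2 φ) (t, x₁, x₂) * _ = _
  rw [uncurry3_dx1_eq_fderiv hdiff, uncurry3_dx2_eq_fderiv hdiff]

end Bolker

theorem eq_zero_and_eq_zero_of_det_ne_zero {R : Type*} [CommRing R] [NoZeroDivisors R]
    {a b p q r s : R} (hdet : p * s - q * r ≠ 0) (h₁ : a * p + b * q = 0)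
    (h₂ : a * r + b * s = 0) : a = 0 ∧ b = 0 := by
  refine ⟨(mul_eq_zero.1 ?_).resolve_right hdet, (mul_eq_zero.1 ?_).resolve_right hdet⟩
  · linear_combination s * h₁ - q * h₂
  · linear_combination p * h₂ - r * h₁

theorem ContinuousLinearMap.apply_zero_mk (ℓ : (ℝ × ℝ × ℝ) →L[ℝ] ℝ) (a b : ℝ) :
    ℓ (0, a, b) = a * ℓ (0, 1, 0) + b * ℓ (0, 0, 1) := by
  have : ((0 : ℝ), a, b) = a • ((0 : ℝ), (1 : ℝ), (0 : ℝ)) + b • ((0 : ℝ), (0 : ℝ), (1 : ℝ)) := by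
    simp
  rw [this, map_add, map_smul, map_smul, smul_eq_mul, smul_eq_mul]

def projTX : (ℝ × ℝ × ℝ × ℝ) →L[ℝ] ℝ × ℝ × ℝ :=
  (ContinuousLinearMap.id ℝ ℝ).prodMap
    ((ContinuousLinearMap.id ℝ ℝ).prodMap (ContinuousLinearMap.fst ℝ ℝ ℝ))

def projSigma : (ℝ × ℝ × ℝ × ℝ) →L[ℝ] ℝ :=
  (ContinuousLinearMap.snd ℝ ℝ ℝ).comp
    ((ContinuousLinearMap.snd ℝ ℝ (ℝ × ℝ)).comp (ContinuousLinearMap.snd ℝ ℝ (ℝ × ℝ × ℝ)))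

@[simp]
theorem projTX_apply (p : ℝ × ℝ × ℝ × ℝ) : projTX p = (p.1, p.2.1, p.2.2.1) :=
  rfl

@[simp]
theorem projSigma_apply (p : ℝ × ℝ × ℝ × ℝ) : projSigma p = p.2.2.2 :=
  rfl

def measurementMap (Φ ψ : ℝ × ℝ × ℝ → ℝ) (p : ℝ × ℝ × ℝ × ℝ) : ℝ × ℝ × ℝ × ℝ :=
  (Φ (projTX p), p.1, projSigma p, -projSigma p * ψ (projTX p))

theorem piY_eq_measurementMap (φ : ℝ → ℝ → ℝ → ℝ) :
    PiY φ = measurementMap (uncurry3 φ) (uncurry3 (dt φ)) :=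
  rfl

def measurementMapDeriv (ℓ k : (ℝ × ℝ × ℝ) →L[ℝ] ℝ) (c σ : ℝ) :
    (ℝ × ℝ × ℝ × ℝ) →L[ℝ] ℝ × ℝ × ℝ × ℝ :=
  (ℓ.comp projTX).prod ((ContinuousLinearMap.fst ℝ ℝ _).prod
    (projSigma.prod (-σ • k.comp projTX - c • projSigma)))

section

variable {Φ ψ : ℝ × ℝ × ℝ → ℝ} {ℓ k : (ℝ × ℝ × ℝ) →L[ℝ] ℝ} {c σ : ℝ}

theorem measurementMapDeriv_apply (v : ℝ × ℝ × ℝ × ℝ) :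
    measurementMapDeriv ℓ k c σ v =
      (ℓ (projTX v), v.1, projSigma v, -σ * k (projTX v) - c * projSigma v) :=
  rfl

theorem hasFDerivAt_measurementMap {t x₁ x₂ : ℝ} (hΦ : HasFDerivAt Φ ℓ (t, x₁, x₂))
    (hψ : HasFDerivAt ψ k (t, x₁, x₂)) :
    HasFDerivAt (measurementMap Φ ψ) (measurementMapDeriv ℓ k (ψ (t, x₁, x₂)) σ)
      (t, x₁, x₂, σ) := by
  have hσ := projSigma.hasFDerivAt (x := (t, x₁, x₂, σ))
  refine ((hΦ.comp (t, x₁, x₂, σ) projTX.hasFDerivAt).prodMk (hasFDerivAt_fst.prodMk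
    (hσ.prodMk (hσ.neg.mul (hψ.comp (t, x₁, x₂, σ) projTX.hasFDerivAt))))).congr_fderiv ?_
  refine ContinuousLinearMap.ext fun v => ?_
  simp [measurementMapDeriv_apply, sub_eq_add_neg]

theorem ContDiffAt.measurementMap {n : WithTop ℕ∞} {p : ℝ × ℝ × ℝ × ℝ}
    (hΦ : ContDiffAt ℝ n Φ (projTX p)) (hψ : ContDiffAt ℝ n ψ (projTX p)) :
    ContDiffAt ℝ n (measurementMap Φ ψ) p :=
  (hΦ.comp p projTX.contDiff.contDiffAt).prodMk (contDiffAt_fst.prodMk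
    (projSigma.contDiff.contDiffAt.prodMk
      (projSigma.contDiff.contDiffAt.neg.mul (hψ.comp p projTX.contDiff.contDiffAt))))

theorem measurementMapDeriv_injective (hσ : σ ≠ 0)
    (hdet : ℓ (0, 1, 0) * k (0, 0, 1) - ℓ (0, 0, 1) * k (0, 1, 0) ≠ 0) :
    Function.Injective (measurementMapDeriv ℓ k c σ) := by
  refine (injective_iff_map_eq_zero _).2 fun ⟨t, a, b, s⟩ hv => ?_
  simp only [measurementMapDeriv_apply, projTX_apply, projSigma_apply, Prod.mk_eq_zero] at hv
  obtain ⟨hℓ, rfl, rfl, hk⟩ := hv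
  have hk : k (0, a, b) = 0 := by simpa [hσ] using hk
  rw [ContinuousLinearMap.apply_zero_mk] at hℓ hk
  obtain ⟨rfl, rfl⟩ := eq_zero_and_eq_zero_of_det_ne_zero hdet hℓ hk
  rfl

end

theorem ContinuousLinearMap.exists_equiv_of_injective {𝕜 E : Type*} [NontriviallyNormedField 𝕜]
    [CompleteSpace 𝕜] [NormedAddCommGroup E] [NormedSpace 𝕜 E] [FiniteDimensional 𝕜 E]
    (f : E →L[𝕜] E) (hf : Function.Injective f) : ∃ f' : E ≃L[𝕜] E, (f' : E →L[𝕜] E) = f :=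
  ⟨(LinearEquiv.ofInjectiveEndo (f : E →ₗ[𝕜] E) hf).toContinuousLinearEquiv, rfl⟩

section LocalInverse

variable {𝕜 : Type*} [RCLike 𝕜] {E F : Type*} [NormedAddCommGroup E] [NormedSpace 𝕜 E]
  [CompleteSpace E] [NormedAddCommGroup F] [NormedSpace 𝕜 F]
  {f : E → F} {f' : E ≃L[𝕜] F} {a : E} {n : WithTop ℕ∞}

theorem ContDiffAt.exists_bijOn_contDiffOn_inverse (hf : ContDiffAt 𝕜 n f a)
    (hf' : HasFDerivAt f (f' : E →L[𝕜] F) a) (hn : n ≠ 0) (hn' : n ≠ ∞) :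
    ∃ (U : Set E) (V : Set F) (g : F → E), IsOpen U ∧ IsOpen V ∧ a ∈ U ∧ f a ∈ V ∧
      Set.BijOn f U V ∧ ContDiffOn 𝕜 n g V ∧ (∀ x ∈ U, g (f x) = x) ∧ ∀ y ∈ V, f (g y) = y := by
  set e := hf.toOpenPartialHomeomorph f hf' hn
  obtain ⟨w, hw, hgw⟩ :=
    (hf.to_localInverse hf' hn).contDiffOn le_rfl fun h => absurd h hn'
  set e' := (e.symm.restr w).symm
  have ha : f a ∈ e.target ∩ interior w :=
    ⟨hf.image_mem_toOpenPartialHomeomorph_target hf' hn, mem_interior_iff_mem_nhds.2 hw⟩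
  refine ⟨e'.source, e'.target, e.symm, e'.open_source, e'.open_target, ?_, ha,
    e'.bijOn, hgw.mono fun y hy => interior_subset hy.2, fun x hx => e'.left_inv hx,
    fun y hy => e'.right_inv hy⟩
  exact ⟨hf.mem_toOpenPartialHomeomorph_source hf' hn, by simpa [e] using ha.2⟩

end LocalInverse

/-- Lemma 4.3 (measurement side): under the local Bolker condition, Π_Y is a
local diffeomorphism at (t₀, x₀, σ₀) for σ₀ ≠ 0. -/
theorem stmt5 (φ : ℝ → ℝ → ℝ → ℝ) (t₀ x₁ x₂ σ₀ : ℝ)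
    (hφ : ContDiffAt ℝ 2 (fun p : ℝ × ℝ × ℝ => φ p.1 p.2.1 p.2.2) (t₀, x₁, x₂))
    (hσ : σ₀ ≠ 0) (hB : bolker φ t₀ x₁ x₂ ≠ 0) :
    ∃ (U V : Set (ℝ × ℝ × ℝ × ℝ)) (g : ℝ × ℝ × ℝ × ℝ → ℝ × ℝ × ℝ × ℝ),
      IsOpen U ∧ IsOpen V ∧ (t₀, x₁, x₂, σ₀) ∈ U ∧ PiY φ (t₀, x₁, x₂, σ₀) ∈ V ∧
      Set.BijOn (PiY φ) U V ∧ ContDiffOn ℝ 1 g V ∧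
      (∀ q ∈ U, g (PiY φ q) = q) ∧ (∀ y ∈ V, PiY φ (g y) = y) := by
  have hΦ : ContDiffAt ℝ 2 (uncurry3 φ) (t₀, x₁, x₂) := hφ
  set L := fderiv ℝ (uncurry3 φ) (t₀, x₁, x₂)
  set H := fderiv ℝ (fderiv ℝ (uncurry3 φ)) (t₀, x₁, x₂)
  have hdt := hΦ.hasFDerivAt_of_eq_fderiv_apply fun _ => uncurry3_dt_eq_fderiv
  have hinj : Function.Injective
      (measurementMapDeriv L (H.flip (1, 0, 0)) (uncurry3 (dt φ) (t₀, x₁, x₂)) σ₀) :=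
    measurementMapDeriv_injective hσ (by rwa [bolker_eq_fderiv hΦ] at hB)
  have hC : ContDiffAt ℝ 1 (measurementMap (uncurry3 φ) (uncurry3 (dt φ))) (t₀, x₁, x₂, σ₀) :=
    (hΦ.of_le one_le_two).measurementMap
      (hΦ.contDiffAt_of_eq_fderiv_apply fun _ => uncurry3_dt_eq_fderiv)
  have hA := hasFDerivAt_measurementMap (σ := σ₀)
    (hΦ.differentiableAt two_ne_zero).hasFDerivAt hdt
  obtain ⟨A, hA'⟩ := ContinuousLinearMap.exists_equiv_of_injective _ hinj
  rw [← hA'] at hA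
  rw [piY_eq_measurementMap]
  exact hC.exists_bijOn_contDiffOn_inverse hA one_ne_zero (by simp)
end

section
/- Let φ : ℝ × ℝ² → ℝ be C² on a neighborhood of (t₀, x₀), let σ₀ ≠ 0, and assume h(t₀, x₀) ≠ 0. Define Π_X : ℝ × ℝ² × ℝ → ℝ² × ℝ² ≅ ℝ⁴ by Π_X(t, x, σ) = (x, σ·∇ₓφ(t,x)). Then Π_X is a local diffeomorphism at p = (t₀, x₀, σ₀): there exist open sets U ∋ p and V ∋ Π_X(p) such that Π_X maps U bijectively onto V and the inverse map V → U is continuously differentiable. (Part of Lemma 4.3: the position-side projection of the canonical relation is a local diffeomorphism.) -/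
/-- The position-side projection Π_X(t, x, σ) = (x, σ·∇ₓφ(t,x)),
with (t, x¹, x², σ) ∈ ℝ × ℝ² × ℝ and values in ℝ² × ℝ² ≅ ℝ⁴. -/
noncomputable def PiX (φ : ℝ → ℝ → ℝ → ℝ) (p : ℝ × ℝ × ℝ × ℝ) : ℝ × ℝ × ℝ × ℝ :=
  (p.2.1, p.2.2.1, p.2.2.2 * dx1 φ p.1 p.2.1 p.2.2.1,
    p.2.2.2 * dx2 φ p.1 p.2.1 p.2.2.1)

/-!
Since `φ` is `C²`, the spatial gradient `∇ₓφ` is `C¹`, hence so is `Π_X`. At `p` the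
differential of `Π_X` sends `(τ, ξ, s)` to `(ξ, s ∇ₓφ + σ₀ D(∇ₓφ)(τ, ξ))`; on its kernel
`ξ = 0` and `s ∇ₓφ + σ₀ τ ∂ₜ∇ₓφ = 0`. The Bolker determinant is `det (∇ₓφ, ∂ₜ∇ₓφ)`, so
`h(t₀, x₀) ≠ 0` and `σ₀ ≠ 0` force `s = τ = 0`, and the inverse function theorem applies.
-/

open Function Set Topology

theorem ContDiffAt.exists_isOpen_bijOn_contDiffOn_inverse {𝕂 E F : Type*} [RCLike 𝕂]
    [NormedAddCommGroup E] [NormedSpace 𝕂 E] [CompleteSpace E] [NormedAddCommGroup F]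
    [NormedSpace 𝕂 F] {f : E → F} {f' : E ≃L[𝕂] F} {a : E} {n : ℕ}
    (hf : ContDiffAt 𝕂 n f a) (hf' : HasFDerivAt f (f' : E →L[𝕂] F) a) (hn : n ≠ 0) :
    ∃ (U : Set E) (V : Set F) (g : F → E), IsOpen U ∧ IsOpen V ∧ a ∈ U ∧ f a ∈ V ∧ BijOn f U V ∧
      ContDiffOn 𝕂 n g V ∧ (∀ x ∈ U, g (f x) = x) ∧ ∀ y ∈ V, f (g y) = y := by
  have hn' : (n : WithTop ℕ∞) ≠ 0 := by exact_mod_cast hn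
  set e := hf.toOpenPartialHomeomorph f hf' hn'
  obtain ⟨w, hw, hew⟩ := (hf.to_localInverse hf' hn').contDiffOn le_rfl (by simp)
  set e' := (e.symm.restrOpen (interior w) isOpen_interior).symm
  have he'a : a ∈ e'.source :=
    ⟨hf.mem_toOpenPartialHomeomorph_source hf' hn', mem_interior_iff_mem_nhds.2 hw⟩
  refine ⟨e'.source, e'.target, e'.symm, e'.open_source, e'.open_target, he'a, e'.map_source he'a,
    e'.bijOn, ?_, fun x hx => e'.left_inv hx, fun y hy => e'.right_inv hy⟩
  exact hew.mono (inter_subset_right.trans interior_subset)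

theorem ContDiffAt.exists_isOpen_bijOn_contDiffOn_inverse_of_injective {𝕂 E : Type*} [RCLike 𝕂]
    [NormedAddCommGroup E] [NormedSpace 𝕂 E] [FiniteDimensional 𝕂 E] {f : E → E} {a : E} {n : ℕ}
    (hf : ContDiffAt 𝕂 n f a) (hn : n ≠ 0) (hinj : Injective (fderiv 𝕂 f a)) :
    ∃ (U V : Set E) (g : E → E), IsOpen U ∧ IsOpen V ∧ a ∈ U ∧ f a ∈ V ∧ BijOn f U V ∧
      ContDiffOn 𝕂 n g V ∧ (∀ x ∈ U, g (f x) = x) ∧ ∀ y ∈ V, f (g y) = y := by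
  have : CompleteSpace E := FiniteDimensional.complete 𝕂 E
  let f' := (LinearEquiv.ofInjectiveEndo (fderiv 𝕂 f a : E →ₗ[𝕂] E) hinj).toContinuousLinearEquiv
  exact hf.exists_isOpen_bijOn_contDiffOn_inverse (f' := f')
    (hf.differentiableAt (by exact_mod_cast hn)).hasFDerivAt hn

theorem eq_zero_and_eq_zero_of_mul_sub_mul_ne_zero {R : Type*} [CommRing R] [NoZeroDivisors R]
    {a b c d α β : R} (h : a * d - b * c ≠ 0) (h₁ : α * a + β * c = 0) (h₂ : α * b + β * d = 0) :
    α = 0 ∧ β = 0 := by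
  have hα : α * (a * d - b * c) = 0 := by linear_combination d * h₁ - c * h₂
  have hβ : β * (a * d - b * c) = 0 := by linear_combination a * h₂ - b * h₁
  exact ⟨(mul_eq_zero.1 hα).resolve_right h, (mul_eq_zero.1 hβ).resolve_right h⟩

theorem deriv_comp_prodMk_left {𝕜 E F : Type*} [NontriviallyNormedField 𝕜] [NormedAddCommGroup E]
    [NormedSpace 𝕜 E] [NormedAddCommGroup F] [NormedSpace 𝕜 F] {G : 𝕜 × E → F} {t : 𝕜} {x : E}
    (hG : DifferentiableAt 𝕜 G (t, x)) : deriv (fun s => G (s, x)) t = fderiv 𝕜 G (t, x) (1, 0) :=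
  (hG.hasFDerivAt.comp_hasDerivAt t ((hasDerivAt_id t).prodMk (hasDerivAt_const t x))).deriv

theorem ContDiffAt.eventually_differentiableAt_s6 {𝕜 E F : Type*} [NontriviallyNormedField 𝕜]
    [NormedAddCommGroup E] [NormedSpace 𝕜 E] [NormedAddCommGroup F] [NormedSpace 𝕜 F]
    {f : E → F} {x : E} {n : WithTop ℕ∞} (hf : ContDiffAt 𝕜 n f x) (hn : 1 ≤ n) :
    ∀ᶠ y in 𝓝 x, DifferentiableAt 𝕜 f y :=
  ((hf.of_le hn).eventually (by simp)).mono fun _ hy => hy.differentiableAt one_ne_zero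

section Bolker

variable {φ : ℝ → ℝ → ℝ → ℝ}

theorem dx1_eq_fderiv {t y z : ℝ} (h : DifferentiableAt ℝ ↿φ (t, y, z)) :
    dx1 φ t y z = fderiv ℝ ↿φ (t, y, z) (0, 1, 0) :=
  (HasFDerivAt.comp_hasDerivAt (l := ↿φ) y h.hasFDerivAt
    ((hasDerivAt_const y t).prodMk ((hasDerivAt_id y).prodMk (hasDerivAt_const y z)))).deriv

theorem dx2_eq_fderiv {t y z : ℝ} (h : DifferentiableAt ℝ ↿φ (t, y, z)) :
    dx2 φ t y z = fderiv ℝ ↿φ (t, y, z) (0, 0, 1) :=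
  (HasFDerivAt.comp_hasDerivAt (l := ↿φ) z h.hasFDerivAt
    ((hasDerivAt_const z t).prodMk ((hasDerivAt_const z y).prodMk (hasDerivAt_id z)))).deriv

theorem contDiffAt_uncurry_dx1 {m n : WithTop ℕ∞} {q : ℝ × ℝ × ℝ} (h : ContDiffAt ℝ n ↿φ q)
    (hmn : m + 1 ≤ n) : ContDiffAt ℝ m ↿(dx1 φ) q :=
  ((h.fderiv_right hmn).clm_apply contDiffAt_const).congr_of_eventuallyEq <|
    (h.eventually_differentiableAt_s6 (le_add_self.trans hmn)).mono fun _ hq => dx1_eq_fderiv hq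

theorem contDiffAt_uncurry_dx2 {m n : WithTop ℕ∞} {q : ℝ × ℝ × ℝ} (h : ContDiffAt ℝ n ↿φ q)
    (hmn : m + 1 ≤ n) : ContDiffAt ℝ m ↿(dx2 φ) q :=
  ((h.fderiv_right hmn).clm_apply contDiffAt_const).congr_of_eventuallyEq <|
    (h.eventually_differentiableAt_s6 (le_add_self.trans hmn)).mono fun _ hq => dx2_eq_fderiv hq

theorem bolker_eq_fderiv_s6 {t y z : ℝ} (h₁ : DifferentiableAt ℝ ↿(dx1 φ) (t, y, z))
    (h₂ : DifferentiableAt ℝ ↿(dx2 φ) (t, y, z)) :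
    bolker φ t y z = dx1 φ t y z * fderiv ℝ ↿(dx2 φ) (t, y, z) (1, 0) -
      dx2 φ t y z * fderiv ℝ ↿(dx1 φ) (t, y, z) (1, 0) := by
  rw [bolker, ← deriv_comp_prodMk_left h₁, ← deriv_comp_prodMk_left h₂]
  rfl

theorem contDiffAt_PiX {n : WithTop ℕ∞} {t y z σ : ℝ} (h₁ : ContDiffAt ℝ n ↿(dx1 φ) (t, y, z))
    (h₂ : ContDiffAt ℝ n ↿(dx2 φ) (t, y, z)) : ContDiffAt ℝ n (PiX φ) (t, y, z, σ) := by
  have hπ : ContDiffAt ℝ n (fun q : ℝ × ℝ × ℝ × ℝ => (q.1, q.2.1, q.2.2.1)) (t, y, z, σ) := by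
    fun_prop
  have hσ : ContDiffAt ℝ n (fun q : ℝ × ℝ × ℝ × ℝ => q.2.2.2) (t, y, z, σ) := by fun_prop
  exact contDiffAt_snd.fst.prodMk (contDiffAt_snd.snd.fst.prodMk
    ((hσ.mul (ContDiffAt.comp (g := ↿(dx1 φ)) (t, y, z, σ) h₁ hπ)).prodMk
      (hσ.mul (ContDiffAt.comp (g := ↿(dx2 φ)) (t, y, z, σ) h₂ hπ))))

theorem fderiv_PiX_apply {t y z σ : ℝ} (h₁ : DifferentiableAt ℝ ↿(dx1 φ) (t, y, z))
    (h₂ : DifferentiableAt ℝ ↿(dx2 φ) (t, y, z)) (v : ℝ × ℝ × ℝ × ℝ) :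
    fderiv ℝ (PiX φ) (t, y, z, σ) v = (v.2.1, v.2.2.1,
      σ * fderiv ℝ ↿(dx1 φ) (t, y, z) (v.1, v.2.1, v.2.2.1) + dx1 φ t y z * v.2.2.2,
      σ * fderiv ℝ ↿(dx2 φ) (t, y, z) (v.1, v.2.1, v.2.2.1) + dx2 φ t y z * v.2.2.2) := by
  have hid := hasFDerivAt_id (𝕜 := ℝ) (t, y, z, σ)
  have hπ : HasFDerivAt (fun q : ℝ × ℝ × ℝ × ℝ => (q.1, q.2.1, q.2.2.1)) _ (t, y, z, σ) :=
    hid.fst.prodMk (hid.snd.fst.prodMk hid.snd.snd.fst)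
  have hd₁ := HasFDerivAt.comp (g := ↿(dx1 φ)) (t, y, z, σ) h₁.hasFDerivAt hπ
  have hd₂ := HasFDerivAt.comp (g := ↿(dx2 φ)) (t, y, z, σ) h₂.hasFDerivAt hπ
  have hPiX : HasFDerivAt (PiX φ) _ (t, y, z, σ) :=
    hid.snd.fst.prodMk (hid.snd.snd.fst.prodMk
      ((hid.snd.snd.snd.mul hd₁).prodMk (hid.snd.snd.snd.mul hd₂)))
  rw [hPiX.fderiv]
  rfl

theorem injective_fderiv_PiX {t y z σ : ℝ} (h₁ : DifferentiableAt ℝ ↿(dx1 φ) (t, y, z))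
    (h₂ : DifferentiableAt ℝ ↿(dx2 φ) (t, y, z)) (hσ : σ ≠ 0) (hB : bolker φ t y z ≠ 0) :
    Injective (fderiv ℝ (PiX φ) (t, y, z, σ)) := by
  rw [injective_iff_map_eq_zero]
  rintro ⟨τ, u, w, s⟩ hv
  rw [fderiv_PiX_apply h₁ h₂] at hv
  obtain ⟨rfl, rfl, h₃, h₄⟩ : u = 0 ∧ w = 0 ∧ _ ∧ _ := by simpa only [Prod.mk_eq_zero] using hv
  have hτ : ((τ, 0, 0) : ℝ × ℝ × ℝ) = τ • (1, 0) := by simp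
  rw [hτ, map_smul, smul_eq_mul] at h₃ h₄
  rw [bolker_eq_fderiv_s6 h₁ h₂] at hB
  obtain ⟨rfl, hστ⟩ := eq_zero_and_eq_zero_of_mul_sub_mul_ne_zero hB (α := s) (β := σ * τ)
    (by linear_combination h₃) (by linear_combination h₄)
  simp [(mul_eq_zero.1 hστ).resolve_left hσ]

end Bolker

/-- Lemma 4.3 (position side): under the local Bolker condition, Π_X is a
local diffeomorphism at (t₀, x₀, σ₀) for σ₀ ≠ 0. -/
theorem stmt6 (φ : ℝ → ℝ → ℝ → ℝ) (t₀ x₁ x₂ σ₀ : ℝ)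
    (hφ : ContDiffAt ℝ 2 (fun p : ℝ × ℝ × ℝ => φ p.1 p.2.1 p.2.2) (t₀, x₁, x₂))
    (hσ : σ₀ ≠ 0) (hB : bolker φ t₀ x₁ x₂ ≠ 0) :
    ∃ (U V : Set (ℝ × ℝ × ℝ × ℝ)) (g : ℝ × ℝ × ℝ × ℝ → ℝ × ℝ × ℝ × ℝ),
      IsOpen U ∧ IsOpen V ∧ (t₀, x₁, x₂, σ₀) ∈ U ∧ PiX φ (t₀, x₁, x₂, σ₀) ∈ V ∧
      Set.BijOn (PiX φ) U V ∧ ContDiffOn ℝ 1 g V ∧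
      (∀ q ∈ U, g (PiX φ q) = q) ∧ (∀ y ∈ V, PiX φ (g y) = y) := by
  have h₁ : ContDiffAt ℝ 1 ↿(dx1 φ) (t₀, x₁, x₂) := contDiffAt_uncurry_dx1 (φ := φ) hφ (by norm_num)
  have h₂ : ContDiffAt ℝ 1 ↿(dx2 φ) (t₀, x₁, x₂) := contDiffAt_uncurry_dx2 (φ := φ) hφ (by norm_num)
  have hPiX : ContDiffAt ℝ (1 : ℕ) (PiX φ) (t₀, x₁, x₂, σ₀) := contDiffAt_PiX h₁ h₂
  exact_mod_cast hPiX.exists_isOpen_bijOn_contDiffOn_inverse_of_injective one_ne_zero <|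
    injective_fderiv_PiX (h₁.differentiableAt one_ne_zero) (h₂.differentiableAt one_ne_zero) hσ hB
end

section
/- Let X be a Banach space and Y, Z normed vector spaces over ℝ. Let N : X → Y be an injective continuous linear map, let K : X → Z be a compact continuous linear operator, and suppose there exist constants C ≥ 0 and C_s ≥ 0 such that ‖f‖_X ≤ C‖N f‖_Y + C_s‖K f‖_Z for all f ∈ X. Then there exists a constant C′ > 0 such that ‖f‖_X ≤ C′‖N f‖_Y for all f ∈ X. (The abstract functional-analytic content of Proposition 6.2: an a priori estimate with a compact error term together with injectivity yields a stability estimate.) -/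
/-!
If no such `C'` exists, there are unit vectors `gₙ` with `N gₙ → 0`. Compactness of `K` gives
a subsequence along which `K gₙ` is Cauchy; the estimate, applied to differences, then makes
`gₙ` itself Cauchy along it. Its limit is a unit vector in the kernel of `N`, contradicting
injectivity.
-/

open Filter Topology

theorem cauchySeq_of_dist_le_add {α β γ : Type*}
    [PseudoMetricSpace α] [PseudoMetricSpace β] [PseudoMetricSpace γ]
    {N : α → β} {K : α → γ} {C Cs : ℝ}
    (hest : ∀ x y, dist x y ≤ C * dist (N x) (N y) + Cs * dist (K x) (K y))
    {u : ℕ → α} (hN : CauchySeq (N ∘ u)) (hK : CauchySeq (K ∘ u)) : CauchySeq u := by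
  rw [cauchySeq_iff_tendsto_dist_atTop_0] at hN hK ⊢
  refine squeeze_zero (fun _ => dist_nonneg) (fun p : ℕ × ℕ => hest (u p.1) (u p.2)) ?_
  simpa using (hN.const_mul C).add (hK.const_mul Cs)

theorem IsCompactOperator.exists_cauchySeq_comp_of_bounded {𝕜 X Z : Type*}
    [NontriviallyNormedField 𝕜] [SeminormedAddCommGroup X] [NormedSpace 𝕜 X]
    [SeminormedAddCommGroup Z] [NormedSpace 𝕜 Z] {K : X →L[𝕜] Z} (hK : IsCompactOperator K)
    {g : ℕ → X} {r : ℝ} (hg : ∀ n, ‖g n‖ ≤ r) :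
    ∃ φ : ℕ → ℕ, StrictMono φ ∧ CauchySeq (K ∘ g ∘ φ) := by
  obtain ⟨M, hM, hKM⟩ := hK.image_closedBall_subset_compact (𝕜₁ := 𝕜) r
  have hgM : ∀ n, K (g n) ∈ M := fun n => hKM ⟨g n, by simpa using hg n, rfl⟩
  obtain ⟨z, -, φ, hφ, hz⟩ := hM.tendsto_subseq hgM
  exact ⟨φ, hφ, hz.cauchySeq⟩

theorem ContinuousLinearMap.exists_norm_eq_one_tendsto_zero {X Y : Type*}
    [NormedAddCommGroup X] [NormedSpace ℝ X] [SeminormedAddCommGroup Y] [NormedSpace ℝ Y]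
    (N : X →L[ℝ] Y) (h : ∀ C > 0, ∃ f : X, C * ‖N f‖ < ‖f‖) :
    ∃ g : ℕ → X, (∀ n, ‖g n‖ = 1) ∧ Tendsto (fun n => N (g n)) atTop (𝓝 0) := by
  choose f hf using fun n : ℕ => h (n + 1) n.cast_add_one_pos
  have hf0 (n : ℕ) : 0 < ‖f n‖ :=
    (mul_nonneg n.cast_add_one_pos.le (norm_nonneg _)).trans_lt (hf n)
  refine ⟨fun n => ‖f n‖⁻¹ • f n, fun n => norm_smul_inv_norm (norm_pos_iff.1 (hf0 n)), ?_⟩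
  refine squeeze_zero_norm (fun n => ?_) tendsto_one_div_add_atTop_nhds_zero_nat
  rw [map_smul, norm_smul, norm_inv, norm_norm, inv_mul_le_iff₀ (hf0 n), mul_one_div,
    le_div_iff₀ n.cast_add_one_pos, mul_comm]
  exact (hf n).le

theorem stmt11_general {X Y Z : Type*}
    [NormedAddCommGroup X] [NormedSpace ℝ X] [CompleteSpace X]
    [NormedAddCommGroup Y] [NormedSpace ℝ Y]
    [NormedAddCommGroup Z] [NormedSpace ℝ Z]
    (N : X →L[ℝ] Y) (K : X →L[ℝ] Z)
    (hN : Function.Injective N) (hK : IsCompactOperator K)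
    (C Cs : ℝ)
    (hest : ∀ f : X, ‖f‖ ≤ C * ‖N f‖ + Cs * ‖K f‖) :
    ∃ C' > 0, ∀ f : X, ‖f‖ ≤ C' * ‖N f‖ := by
  by_contra! h
  obtain ⟨g, hg1, hNg⟩ := N.exists_norm_eq_one_tendsto_zero h
  obtain ⟨φ, hφ, hKg⟩ := hK.exists_cauchySeq_comp_of_bounded fun n => (hg1 n).le
  have hNgφ := hNg.comp hφ.tendsto_atTop
  have hdist : ∀ x y, dist x y ≤ C * dist (N x) (N y) + Cs * dist (K x) (K y) := fun x y => by
    simpa only [dist_eq_norm, map_sub] using hest (x - y)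
  obtain ⟨l, hl⟩ := cauchySeq_tendsto_of_complete
    (cauchySeq_of_dist_le_add hdist hNgφ.cauchySeq hKg)
  have hl1 : ‖l‖ = 1 := tendsto_nhds_unique hl.norm (by simp [hg1])
  have hNl : N l = 0 := tendsto_nhds_unique ((N.continuous.tendsto l).comp hl) hNgφ
  simp [hN (hNl.trans (map_zero N).symm)] at hl1

/-- Proposition 6.2 (abstract form): if N is an injective continuous linear
map, K is a compact operator, and ‖f‖ ≤ C‖Nf‖ + C_s‖Kf‖ for all f, then there
is C′ > 0 with ‖f‖ ≤ C′‖Nf‖ for all f. -/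
theorem stmt11 {X Y Z : Type*}
    [NormedAddCommGroup X] [NormedSpace ℝ X] [CompleteSpace X]
    [NormedAddCommGroup Y] [NormedSpace ℝ Y]
    [NormedAddCommGroup Z] [NormedSpace ℝ Z]
    (N : X →L[ℝ] Y) (K : X →L[ℝ] Z)
    (hN : Function.Injective N) (hK : IsCompactOperator K)
    (C Cs : ℝ) (hC : 0 ≤ C) (hCs : 0 ≤ Cs)
    (hest : ∀ f : X, ‖f‖ ≤ C * ‖N f‖ + Cs * ‖K f‖) :
    ∃ C' > 0, ∀ f : X, ‖f‖ ≤ C' * ‖N f‖ :=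
  stmt11_general N K hN hK C Cs hest
end
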